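/- For natural numbers n, p, q, c, d with c+d ≤ n, the sum over k from 0 to n of C(p+k,p)·C(q+n-k,q)·C(k,c)·C(n-k,d)·H(p+k)·H(q+n-k) equals C(n+p+q+1, n-c-d)·C(p+c,c)·C(q+d,d)·(H2(p+q+c+d+1) - H2(n+p+q+1) + (H(n+p+q+1) - H(p+q+c+d+1) + H(p+c))·(H(n+p+q+1) - H(p+q+c+d+1) + H(q+d))). -/

import Mathlib

noncomputable def H (m : ℕ) : ℚ := ∑ j ∈ Finset.range m, (1 : ℚ) / (j + 1)

noncomputable def H2 (m : ℕ) : ℚ := ∑ j ∈ Finset.range m, (1 : ℚ) / ((j : ℚ) + 1) ^ 2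

/-!
Harmonic numbers are the Taylor coefficients of rising factorials: with `h = H(A + j) - H(A)`,
`s = H2(A + j) - H2(A)` and `e³ = 0`, `(A + 1 + e)_j = (A + 1)_j (1 + h e + (h² - s)/2 e²)`.
Evaluate the Chu–Vandermonde identity `(x + y)_m = ∑ C(m, i) (x)_i (y)_(m-i)` at
`x = A + 1 + ε₁`, `y = B + 1 + ε₂` with `ε₁² = ε₂² = 0`, and read off the coefficient of `ε₁ε₂`
after multiplying by `(1 + H(A) ε₁)(1 + H(B) ε₂)`: since `(A + 1)_i = i! C(A + i, A)` this is
the case `c = d = 0`. The general case reduces to it through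
`C(p + k, p) C(k, c) = C(p + c, c) C(p + k, p + c)` with `A = p + c`, `B = q + d`.
-/

open Polynomial Finset TrivSqZeroExt DualNumber
open scoped Nat

local notation "𝔻" => DualNumber (DualNumber ℚ)

theorem H_succ (m : ℕ) : H (m + 1) = H m + 1 / ((m : ℚ) + 1) := sum_range_succ _ _

theorem H2_succ (m : ℕ) : H2 (m + 1) = H2 m + 1 / ((m : ℚ) + 1) ^ 2 := sum_range_succ _ _

theorem ascPochhammer_eval_add {S : Type*} [CommRing S] (x y : S) (n : ℕ) :
    (ascPochhammer S n).eval (x + y) = ∑ ij ∈ antidiagonal n,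
      n.choose ij.1 * ((ascPochhammer S ij.1).eval x * (ascPochhammer S ij.2).eval y) := by
  have key := Ring.descPochhammer_smeval_add (r := -x) (s := -y) n (Commute.all _ _)
  simp only [← aeval_eq_smeval, aeval_def, eval₂_eq_eval_map, descPochhammer_map] at key
  rw [← neg_neg (x + y), ascPochhammer_eval_neg_eq_descPochhammer, neg_add, key, mul_sum]
  refine sum_congr rfl fun ij hij => ?_
  rw [← neg_neg x, ← neg_neg y, ascPochhammer_eval_neg_eq_descPochhammer,
    ascPochhammer_eval_neg_eq_descPochhammer, neg_neg, neg_neg,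
    ← HasAntidiagonal.mem_antidiagonal.mp hij, pow_add]
  ring

theorem ascPochhammer_eval_natCast_add_one (A j : ℕ) :
    (ascPochhammer ℚ j).eval ((A : ℚ) + 1) = j ! * (A + j).choose A := by
  rw [← Nat.cast_succ, ← ascPochhammer_eval_cast, ascPochhammer_nat_eq_ascFactorial,
    Nat.ascFactorial_eq_factorial_mul_choose, Nat.choose_symm_add]
  push_cast
  ring

theorem ascPochhammer_eval_natCast_add_one_add_of_cube_eq_zero {S : Type*} [CommRing S]
    [Algebra ℚ S] {e : S} (he : e ^ 3 = 0) (A j : ℕ) :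
    (ascPochhammer S j).eval ((A + 1 : S) + e) =
      (ascPochhammer ℚ j).eval ((A : ℚ) + 1) • (1 + (H (A + j) - H A) • e +
        (((H (A + j) - H A) ^ 2 - (H2 (A + j) - H2 A)) / 2) • e ^ 2) := by
  induction j with
  | zero => simp
  | succ j ih =>
    set h := H (A + j) - H A
    set s := H2 (A + j) - H2 A
    set t : ℚ := A + j + 1
    have ht : t ≠ 0 := by positivity
    have hH : H (A + (j + 1)) - H A = h + 1 / t := by
      rw [← add_assoc, H_succ]; push_cast; ring
    have hH2 : H2 (A + (j + 1)) - H2 A = s + 1 / t ^ 2 := by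
      rw [← add_assoc, H2_succ]; push_cast; ring
    have hcoeff : ((h + 1 / t) ^ 2 - (s + 1 / t ^ 2)) / 2 = (h ^ 2 - s) / 2 + h * (1 / t) := by
      field_simp; ring
    have hinv := congrArg (algebraMap ℚ S) (mul_one_div_cancel ht)
    rw [ascPochhammer_succ_eval, ih, ascPochhammer_succ_eval, hH, hH2, hcoeff]
    set P := (ascPochhammer ℚ j).eval ((A : ℚ) + 1)
    simp only [Algebra.smul_def, map_add, map_mul, map_one, map_natCast, t] at hinv ⊢
    linear_combination algebraMap ℚ S P * algebraMap ℚ S ((h ^ 2 - s) / 2) * he -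
      algebraMap ℚ S P * (e + algebraMap ℚ S h * e ^ 2) * hinv

theorem pow_three_eq_zero_of_fst_fst_eq_zero {x : 𝔻} (hx : x.fst.fst = 0) : x ^ 3 = 0 := by
  ext <;> simp [pow_succ, hx]

/-- Reading `𝔻` as `ℚ[ε₁, ε₂]/(ε₁², ε₂²)` with `ε₁ = inl ε` and `ε₂ = ε`, this is the coefficient
of `ε₁ε₂` in `z (1 + a ε₁)(1 + b ε₂)`. -/
def mixedCoeff (a b : ℚ) : 𝔻 →+ ℚ :=
  AddMonoidHom.mk' (fun z => (z * ((1 + a • inl ε) * (1 + b • ε))).snd.snd) fun x y => by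
    simp [add_mul]

theorem mixedCoeff_natCast_mul (a b : ℚ) (n : ℕ) (z : 𝔻) :
    mixedCoeff a b (n * z) = n * mixedCoeff a b z := by
  rw [← nsmul_eq_mul, map_nsmul, nsmul_eq_mul]

theorem mixedCoeff_ascPochhammer_mul_ascPochhammer (A B i j : ℕ) :
    mixedCoeff (H A) (H B) ((ascPochhammer 𝔻 i).eval ((A + 1 : 𝔻) + inl ε) *
        (ascPochhammer 𝔻 j).eval ((B + 1 : 𝔻) + ε)) =
      i ! * j ! * (((A + i).choose A : ℚ) * (B + j).choose B * H (A + i) * H (B + j)) := by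
  rw [ascPochhammer_eval_natCast_add_one_add_of_cube_eq_zero (S := 𝔻)
      (pow_three_eq_zero_of_fst_fst_eq_zero (x := inl ε) (by simp)),
    ascPochhammer_eval_natCast_add_one_add_of_cube_eq_zero (S := 𝔻)
      (pow_three_eq_zero_of_fst_fst_eq_zero (x := ε) (by simp))]
  simp [mixedCoeff, pow_succ, ascPochhammer_eval_natCast_add_one]
  ring

theorem mixedCoeff_ascPochhammer (A B m : ℕ) :
    mixedCoeff (H A) (H B)
        ((ascPochhammer 𝔻 m).eval (((A + 1 : 𝔻) + inl ε) + ((B + 1 : 𝔻) + ε))) =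
      m ! * (A + B + 1 + m).choose m * (H2 (A + B + 1) - H2 (A + B + 1 + m) +
        (H (A + B + 1 + m) - H (A + B + 1) + H A) * (H (A + B + 1 + m) - H (A + B + 1) + H B)) := by
  have hsum : ((A + 1 : 𝔻) + inl ε) + ((B + 1 : 𝔻) + ε) = ((A + B + 1 : ℕ) + 1 : 𝔻) + (inl ε + ε) := by
    push_cast; ring
  rw [hsum, ascPochhammer_eval_natCast_add_one_add_of_cube_eq_zero (S := 𝔻)
      (pow_three_eq_zero_of_fst_fst_eq_zero (x := inl ε + ε) (by simp)),
    ascPochhammer_eval_natCast_add_one, ← Nat.choose_symm_add]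
  simp [mixedCoeff, pow_succ]
  ring

theorem sum_antidiagonal_choose_mul_H_mul_H (A B m : ℕ) :
    ∑ ij ∈ antidiagonal m,
        ((A + ij.1).choose A : ℚ) * (B + ij.2).choose B * H (A + ij.1) * H (B + ij.2) =
      ((A + B + 1 + m).choose m : ℚ) * (H2 (A + B + 1) - H2 (A + B + 1 + m) +
        (H (A + B + 1 + m) - H (A + B + 1) + H A) * (H (A + B + 1 + m) - H (A + B + 1) + H B)) := by
  have V := congrArg (mixedCoeff (H A) (H B))
    (ascPochhammer_eval_add ((A + 1 : 𝔻) + inl ε) ((B + 1 : 𝔻) + ε) m)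
  simp only [map_sum, mixedCoeff_natCast_mul, mixedCoeff_ascPochhammer,
    mixedCoeff_ascPochhammer_mul_ascPochhammer] at V
  have hfac : ∀ ij ∈ antidiagonal m, ∀ x : ℚ, m.choose ij.1 * (ij.1 ! * ij.2 ! * x) = m ! * x := by
    rintro ⟨i, j⟩ hij x
    obtain rfl : i + j = m := HasAntidiagonal.mem_antidiagonal.mp hij
    rw [← mul_assoc, ← mul_assoc, ← Nat.add_choose_mul_factorial_mul_factorial,
      Nat.choose_symm_add]
    push_cast
    ring
  rw [sum_congr rfl fun ij hij => hfac ij hij _, ← mul_sum] at V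
  apply mul_left_cancel₀ (Nat.cast_ne_zero.mpr (Nat.factorial_ne_zero m) : (m ! : ℚ) ≠ 0)
  linear_combination -V

theorem sum_antidiagonal_add_add_eq_of_eq_zero {M : Type*} [AddCommMonoid M] {f : ℕ → ℕ → M}
    {c d : ℕ} (hc : ∀ i j, i < c → f i j = 0) (hd : ∀ i j, j < d → f i j = 0) (m : ℕ) :
    ∑ ij ∈ antidiagonal (c + d + m), f ij.1 ij.2 =
      ∑ ij ∈ antidiagonal m, f (c + ij.1) (d + ij.2) := by
  let shift : ℕ × ℕ ↪ ℕ × ℕ := (addLeftEmbedding c).prodMap (addLeftEmbedding d)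
  have hsub : (antidiagonal m).map shift ⊆ antidiagonal (c + d + m) := by
    simp only [subset_iff, mem_map, HasAntidiagonal.mem_antidiagonal]
    rintro _ ⟨⟨i, j⟩, hij, rfl⟩
    simp [shift]
    omega
  rw [← sum_subset hsub, sum_map]
  · rfl
  rintro ⟨i, j⟩ hij hshift
  rw [HasAntidiagonal.mem_antidiagonal] at hij
  have : i < c ∨ j < d := by
    by_contra! hge
    exact hshift (mem_map.mpr ⟨(i - c, j - d), by simp only [HasAntidiagonal.mem_antidiagonal]; omega,
      by simp [shift]; omega⟩)
  rcases this with hi | hj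
  exacts [hc i j hi, hd i j hj]

theorem Nat.add_choose_mul_choose (p c k : ℕ) :
    (p + k).choose p * k.choose c = (p + c).choose c * (p + k).choose (p + c) := by
  have h := Nat.choose_mul (n := p + k) (k := p + c) (s := p) (Nat.le_add_right p c)
  rw [Nat.add_sub_cancel_left, Nat.add_sub_cancel_left] at h
  rw [← h, Nat.choose_symm_add (a := p), mul_comm]

theorem stmt_13 (n p q c d : ℕ) (h : c + d ≤ n) :
    ∑ k ∈ Finset.range (n + 1),
      ((p + k).choose p : ℚ) * (q + n - k).choose q * k.choose c * (n - k).choose d *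
        H (p + k) * H (q + n - k) =
    ((n + p + q + 1).choose (n - c - d) : ℚ) * (p + c).choose c * (q + d).choose d *
      (H2 (p + q + c + d + 1) - H2 (n + p + q + 1) +
        (H (n + p + q + 1) - H (p + q + c + d + 1) + H (p + c)) *
        (H (n + p + q + 1) - H (p + q + c + d + 1) + H (q + d))) := by
  obtain ⟨m, rfl⟩ : ∃ m, n = c + d + m := ⟨n - c - d, by omega⟩
  set n := c + d + m
  let g (i j : ℕ) : ℚ :=
    (p + i).choose (p + c) * (q + j).choose (q + d) * H (p + i) * H (q + j)
  have hsummand : ∀ k ∈ range (n + 1),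
      ((p + k).choose p : ℚ) * (q + n - k).choose q * k.choose c * (n - k).choose d *
        H (p + k) * H (q + n - k) = (p + c).choose c * (q + d).choose d * g k (n - k) := by
    intro k hk
    rw [Nat.add_sub_assoc (Nat.lt_succ_iff.mp (mem_range.mp hk))]
    calc _ = (((p + k).choose p * k.choose c : ℕ) : ℚ) *
          (((q + (n - k)).choose q * (n - k).choose d : ℕ) : ℚ) * (H (p + k) * H (q + (n - k))) := by
          push_cast; ring
      _ = _ := by rw [Nat.add_choose_mul_choose, Nat.add_choose_mul_choose]; push_cast; ring
  rw [sum_congr rfl hsummand, ← mul_sum, ← Nat.sum_antidiagonal_eq_sum_range_succ g,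
    sum_antidiagonal_add_add_eq_of_eq_zero
      (fun i j hi => by simp [g, Nat.choose_eq_zero_of_lt (Nat.add_lt_add_left hi p)])
      (fun i j hj => by simp [g, Nat.choose_eq_zero_of_lt (Nat.add_lt_add_left hj q)])]
  simp only [g, ← add_assoc]
  rw [sum_antidiagonal_choose_mul_H_mul_H, show n - c - d = m by omega,
    show n + p + q + 1 = p + c + (q + d) + 1 + m by omega,
    show p + q + c + d + 1 = p + c + (q + d) + 1 by ring]
  ring
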